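/- (Abduction soundness) Let φ, e, Ψ be predicates on valuations such that φ ∧ e entails Ψ. Suppose φ decomposes as φ_v ∧ φ_w̄ and Ψ decomposes as Ψ_v ∧ Ψ_w̄, where φ_v, e, Ψ_v depend only on a variable set W, and φ_w̄, Ψ_w̄ depend only on the complement of W, and suppose φ_w̄ is satisfiable. Then the abduct φ_v ∧ Ψ_w̄ satisfies: φ ∧ e entails (φ_v ∧ Ψ_w̄) ∧ e, and (φ_v ∧ Ψ_w̄) ∧ e entails Ψ. -/

import Mathlib

/-!
The first entailment is immediate from the decompositions. For the second, given `θ`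
satisfying the abduct and `e`, splice `θ` on `W` with a model `θ₀` of `φ_w̄` off `W`. The
spliced valuation satisfies `φ_v`, `e` and `φ_w̄` (each depends only on one side), hence
`φ ∧ e`, hence `Ψ`; its `Ψ_v` part transfers back to `θ` since `Ψ_v` depends only on `W`,
and `Ψ_w̄ θ` is given.
-/

/-- P depends only on the variables in W. -/
def DependsOnly {Var Val : Type*} (P : (Var → Val) → Prop) (W : Set Var) : Prop :=
  ∀ θ θ' : Var → Val, (∀ x ∈ W, θ x = θ' x) → (P θ ↔ P θ')

namespace DependsOnly

variable {Var Val : Type*} {P : (Var → Val) → Prop} {W : Set Var} [DecidablePred (· ∈ W)]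

theorem piecewise_iff_left (hP : DependsOnly P W) (θ θ' : Var → Val) :
    P (W.piecewise θ θ') ↔ P θ :=
  hP _ _ fun _ hx => Set.piecewise_eq_of_mem W θ θ' hx

theorem piecewise_iff_right (hP : DependsOnly P Wᶜ) (θ θ' : Var → Val) :
    P (W.piecewise θ θ') ↔ P θ' :=
  hP _ _ fun _ hx => Set.piecewise_eq_of_notMem W θ θ' hx

end DependsOnly

theorem abduction_sound_general {Var Val : Type*}
    (φ e Ψ φv φw Ψv Ψw : (Var → Val) → Prop) (W : Set Var)
    (hφ : ∀ θ, φ θ ↔ (φv θ ∧ φw θ))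
    (hΨ : ∀ θ, Ψ θ ↔ (Ψv θ ∧ Ψw θ))
    (hφv : DependsOnly φv W) (he : DependsOnly e W) (hΨv : DependsOnly Ψv W)
    (hφw : DependsOnly φw Wᶜ)
    (hsat : ∃ θ, φw θ)
    (hent : ∀ θ, (φ θ ∧ e θ) → Ψ θ) :
    (∀ θ, (φ θ ∧ e θ) → ((φv θ ∧ Ψw θ) ∧ e θ)) ∧
    (∀ θ, ((φv θ ∧ Ψw θ) ∧ e θ) → Ψ θ) := by
  classical
  constructor
  · rintro θ ⟨hφθ, heθ⟩
    exact ⟨⟨((hφ θ).1 hφθ).1, ((hΨ θ).1 (hent θ ⟨hφθ, heθ⟩)).2⟩, heθ⟩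
  · rintro θ ⟨⟨hφvθ, hΨwθ⟩, heθ⟩
    obtain ⟨θ₀, hθ₀⟩ := hsat
    have hΨ_spliced : Ψ (W.piecewise θ θ₀) :=
      hent _ ⟨(hφ _).2 ⟨(hφv.piecewise_iff_left θ θ₀).2 hφvθ,
        (hφw.piecewise_iff_right θ θ₀).2 hθ₀⟩, (he.piecewise_iff_left θ θ₀).2 heθ⟩
    exact (hΨ θ).2 ⟨(hΨv.piecewise_iff_left θ θ₀).1 ((hΨ _).1 hΨ_spliced).1, hΨwθ⟩

/-- Abduction soundness. -/
theorem abduction_sound {Var Val : Type*} [Nonempty Val]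
    (φ e Ψ φv φw Ψv Ψw : (Var → Val) → Prop) (W : Set Var)
    (hφ : ∀ θ, φ θ ↔ (φv θ ∧ φw θ))
    (hΨ : ∀ θ, Ψ θ ↔ (Ψv θ ∧ Ψw θ))
    (hφv : DependsOnly φv W) (he : DependsOnly e W) (hΨv : DependsOnly Ψv W)
    (hφw : DependsOnly φw Wᶜ) (hΨw : DependsOnly Ψw Wᶜ)
    (hsat : ∃ θ, φw θ)
    (hent : ∀ θ, (φ θ ∧ e θ) → Ψ θ) :
    (∀ θ, (φ θ ∧ e θ) → ((φv θ ∧ Ψw θ) ∧ e θ)) ∧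
    (∀ θ, ((φv θ ∧ Ψw θ) ∧ e θ) → Ψ θ) :=
  abduction_sound_general φ e Ψ φv φw Ψv Ψw W hφ hΨ hφv he hΨv hφw hsat hent
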